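/- Let 𝒮 be a commutative semigroup of n×n matrices over ℝ≥0 acting by max-times multiplication, leaving a closed max cone V ⊆ (ℝ≥0)ⁿ with a nonzero vector invariant. Then 𝒮 has a common eigenvector in V: a nonzero v ∈ V such that for each A ∈ 𝒮 there exists λ_A ∈ ℝ≥0 with A ⊗ v = λ_A·v. -/

import Mathlib

open scoped NNReal

def MaxCone {n : ℕ} (W : Set (Fin n → ℝ≥0)) : Prop :=
  (0 : Fin n → ℝ≥0) ∈ W ∧
  (∀ x ∈ W, ∀ y ∈ W, x ⊔ y ∈ W) ∧
  (∀ r : ℝ≥0, ∀ x ∈ W, r • x ∈ W)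

def maxMul {n : ℕ} (A : Matrix (Fin n) (Fin n) ℝ≥0) (v : Fin n → ℝ≥0) : Fin n → ℝ≥0 :=
  fun i => Finset.univ.sup fun j => A i j * v j

def maxMatMul {n : ℕ} (A B : Matrix (Fin n) (Fin n) ℝ≥0) : Matrix (Fin n) (Fin n) ℝ≥0 :=
  fun i j => Finset.univ.sup fun k => A i k * B k j

/-!
Zorn's lemma, together with compactness of the unit sphere of the sup-norm, gives a minimal
nonzero closed `𝒮`-invariant max cone `W ⊆ V`. For `A ∈ 𝒮` and `c ≥ 0`, commutativity makes
`{v ∈ W | A ⊗ v ≤ c v}` and `{v ∈ W | c v ≤ A ⊗ v}` closed invariant max cones, so by minimality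
each of them is all of `W` as soon as it contains a nonzero vector. For `c > 0` one of them does:
iterating `u ↦ w ⊔ c⁻¹ (A ⊗ u)` from a nonzero `w ∈ W` either converges, to a nonzero `v` with
`A ⊗ v ≤ c v`, or blows up, and then the normalised iterates accumulate at some `v` of norm one
with `c v ≤ A ⊗ v`. So every nonzero `w ∈ W` satisfies `c w ≤ A ⊗ w` or `A ⊗ w ≤ c w` for every
`c`, and connectedness of `[0, ∞)` turns this into `A ⊗ w = λ w`.
-/

open Finset Filter Topology

namespace MaxCone

variable {n : ℕ} {W : Set (Fin n → ℝ≥0)}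

theorem sup_mem (hW : MaxCone W) {x y : Fin n → ℝ≥0} (hx : x ∈ W) (hy : y ∈ W) : x ⊔ y ∈ W :=
  hW.2.1 x hx y hy

theorem smul_mem (hW : MaxCone W) (r : ℝ≥0) {x : Fin n → ℝ≥0} (hx : x ∈ W) : r • x ∈ W :=
  hW.2.2 r x hx

end MaxCone

section MaxMul

variable {n : ℕ}

theorem maxMul_sup (A : Matrix (Fin n) (Fin n) ℝ≥0) (x y : Fin n → ℝ≥0) :
    maxMul A (x ⊔ y) = maxMul A x ⊔ maxMul A y := by
  funext i
  simp only [maxMul, Pi.sup_apply, mul_max]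
  exact sup_sup (f := fun j => A i j * x j) (g := fun j => A i j * y j)

theorem maxMul_smul (A : Matrix (Fin n) (Fin n) ℝ≥0) (r : ℝ≥0) (x : Fin n → ℝ≥0) :
    maxMul A (r • x) = r • maxMul A x := by
  funext i
  simp only [maxMul, Pi.smul_apply, smul_eq_mul, NNReal.mul_finset_sup, mul_left_comm]

theorem monotone_maxMul (A : Matrix (Fin n) (Fin n) ℝ≥0) : Monotone (maxMul A) :=
  fun _ _ h _ => sup_mono_fun fun j _ => mul_le_mul_right (h j) _

theorem continuous_maxMul (A : Matrix (Fin n) (Fin n) ℝ≥0) : Continuous (maxMul A) :=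
  continuous_pi fun _ => Continuous.finset_sup_apply fun j _ =>
    continuous_const.mul (continuous_apply j)

theorem maxMul_maxMatMul (A B : Matrix (Fin n) (Fin n) ℝ≥0) (v : Fin n → ℝ≥0) :
    maxMul (maxMatMul A B) v = maxMul A (maxMul B v) := by
  funext i
  simp only [maxMul, maxMatMul, NNReal.finset_sup_mul, NNReal.mul_finset_sup, mul_assoc]
  exact Finset.sup_comm _ _ _

end MaxMul

theorem exists_eq_smul_of_forall_smul_le_or_le {ι : Type*} {x y : ι → ℝ≥0} (hx : x ≠ 0)
    (h : ∀ c : ℝ≥0, c • x ≤ y ∨ y ≤ c • x) : ∃ c : ℝ≥0, y = c • x := by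
  by_contra! hne
  set I := {c : ℝ≥0 | c • x ≤ y}
  have hIc : Iᶜ = {c | y ≤ c • x} := Set.ext fun c =>
    ⟨(h c).resolve_left, fun hyc hcy => hne c (le_antisymm hyc hcy)⟩
  have hI : IsClopen I :=
    ⟨isClosed_le (continuous_id.smul continuous_const) continuous_const,
      isClosed_compl_iff.1 (hIc ▸ isClosed_le continuous_const
        (continuous_id.smul continuous_const))⟩
  have hIuniv : I = Set.univ :=
    (isClopen_iff.1 hI).resolve_left (Set.nonempty_iff_ne_empty.1 ⟨0, by simp [I]⟩)
  obtain ⟨i, hi⟩ := Function.ne_iff.1 hx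
  have hle : ((y i + 1) / x i) • x ≤ y := by
    change _ ∈ I
    rw [hIuniv]
    trivial
  have := hle i
  rw [Pi.smul_apply, smul_eq_mul, div_mul_cancel₀ _ hi] at this
  exact (lt_add_one (y i)).not_ge this

section SupNorm

variable {ι : Type*} [Fintype ι]

theorem sup_univ_eq_zero_iff {v : ι → ℝ≥0} : univ.sup v = 0 ↔ v = 0 := by
  simp only [Finset.sup_eq_bot_iff, ← bot_eq_zero, mem_univ, true_implies, funext_iff,
    Pi.bot_apply]

theorem sup_univ_smul (r : ℝ≥0) (v : ι → ℝ≥0) : univ.sup (r • v) = r * univ.sup v :=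
  (NNReal.mul_finset_sup r univ v).symm

theorem continuous_sup_univ : Continuous fun v : ι → ℝ≥0 => univ.sup v :=
  Continuous.finset_sup_apply fun i _ => continuous_apply i

theorem isCompact_setOf_sup_univ_eq_one : IsCompact {v : ι → ℝ≥0 | univ.sup v = 1} := by
  refine (isCompact_univ_pi fun _ => isCompact_Icc (a := 0) (b := 1)).of_isClosed_subset
    (isClosed_singleton.preimage continuous_sup_univ) fun v hv i _ => ⟨zero_le, ?_⟩
  exact hv.symm ▸ le_sup (mem_univ i)

theorem sup_univ_inv_smul_self {v : ι → ℝ≥0} (hv : v ≠ 0) :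
    univ.sup ((univ.sup v)⁻¹ • v) = 1 := by
  rw [sup_univ_smul, inv_mul_cancel₀ (mt sup_univ_eq_zero_iff.1 hv)]

end SupNorm

section Iteration

variable {n : ℕ} {W : Set (Fin n → ℝ≥0)} {T : (Fin n → ℝ≥0) → Fin n → ℝ≥0}

theorem exists_map_le_of_bddAbove_iterate (hW : IsClosed W) (hT : Continuous T)
    {w₀ : Fin n → ℝ≥0} (hw₀ : w₀ ≠ 0) (huW : ∀ k, (fun x => w₀ ⊔ T x)^[k] w₀ ∈ W)
    (hu : Monotone fun k => (fun x => w₀ ⊔ T x)^[k] w₀)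
    (hb : BddAbove (Set.range fun k => (fun x => w₀ ⊔ T x)^[k] w₀)) :
    ∃ v ∈ W, v ≠ 0 ∧ T v ≤ v := by
  set v := ⨆ k, (fun x => w₀ ⊔ T x)^[k] w₀
  have hlim : Tendsto _ atTop (𝓝 v) := tendsto_atTop_ciSup hu hb
  have hfix : w₀ ⊔ T v = v := isFixedPt_of_tendsto_iterate hlim
    (continuous_pi fun i => continuous_const.max ((continuous_apply i).comp hT)).continuousAt
  refine ⟨v, hW.mem_of_tendsto hlim (Eventually.of_forall huW), fun hv => hw₀ ?_,
    le_sup_right.trans_eq hfix⟩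
  exact nonpos_iff_eq_zero.1 (hv ▸ le_sup_left.trans_eq hfix)

theorem exists_le_map_of_tendsto_sup_atTop (hW : MaxCone W) (hWc : IsClosed W)
    (hT : Continuous T) (hTs : ∀ (r : ℝ≥0) x, T (r • x) = r • T x) {w₀ : Fin n → ℝ≥0}
    {u : ℕ → Fin n → ℝ≥0} (huW : ∀ k, u k ∈ W) (hu : ∀ k, u k ≤ w₀ ⊔ T (u k))
    (hN : Tendsto (fun k => univ.sup (u k)) atTop atTop) :
    ∃ z ∈ W, z ≠ 0 ∧ z ≤ T z := by
  set N := fun k => univ.sup (u k)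
  set z := fun k => (N k)⁻¹ • u k
  have hz : ∀ k, z k ≤ (N k)⁻¹ • w₀ ⊔ T (z k) := fun k i => by
    simpa only [z, hTs, Pi.smul_apply, Pi.sup_apply, smul_eq_mul, mul_max]
      using mul_le_mul_right (hu k i) (N k)⁻¹
  have hzK : ∀ᶠ k in atTop, z k ∈ W ∩ {v | univ.sup v = 1} := by
    filter_upwards [hN.eventually_gt_atTop 0] with k hk
    exact ⟨hW.smul_mem _ (huW k), sup_univ_inv_smul_self (mt sup_univ_eq_zero_iff.2 hk.ne')⟩
  obtain ⟨z₀, ⟨hz₀W, hz₀1 : univ.sup z₀ = 1⟩, φ, hφ, hlim⟩ :=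
    (isCompact_setOf_sup_univ_eq_one.inter_left hWc).tendsto_subseq' hzK.frequently
  refine ⟨z₀, hz₀W, fun h => zero_ne_one (sup_univ_eq_zero_iff.2 h ▸ hz₀1), fun i => ?_⟩
  have hinv : Tendsto (fun k => (N (φ k))⁻¹) atTop (𝓝 0) :=
    tendsto_inv_atTop_zero.comp (hN.comp hφ.tendsto_atTop)
  have hR : Tendsto (fun k => max ((N (φ k))⁻¹ * w₀ i) (T (z (φ k)) i)) atTop
      (𝓝 (max (0 * w₀ i) (T z₀ i))) :=
    (hinv.mul_const _).max (tendsto_pi_nhds.1 ((hT.tendsto z₀).comp hlim) i)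
  simpa using le_of_tendsto_of_tendsto' (tendsto_pi_nhds.1 hlim i) hR fun k => hz (φ k) i

theorem exists_ne_zero_map_le_or_le_map (hW : MaxCone W) (hWc : IsClosed W)
    (hTW : Set.MapsTo T W W) (hT : Continuous T) (hTm : Monotone T)
    (hTs : ∀ (r : ℝ≥0) x, T (r • x) = r • T x) {w₀ : Fin n → ℝ≥0} (hw₀ : w₀ ∈ W)
    (hw₀0 : w₀ ≠ 0) : ∃ v ∈ W, v ≠ 0 ∧ (T v ≤ v ∨ v ≤ T v) := by
  set F := fun x => w₀ ⊔ T x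
  have hu : Monotone fun k => F^[k] w₀ :=
    (monotone_const.sup hTm).monotone_iterate_of_le_map le_sup_left
  have huW : ∀ k, F^[k] w₀ ∈ W := fun k =>
    Set.MapsTo.iterate (fun _ hx => hW.sup_mem hw₀ (hTW hx)) k hw₀
  by_cases hb : BddAbove (Set.range fun k => F^[k] w₀)
  · obtain ⟨v, hv, hv0, hTv⟩ := exists_map_le_of_bddAbove_iterate hWc hT hw₀0 huW hu hb
    exact ⟨v, hv, hv0, Or.inl hTv⟩
  · have hN : Tendsto (fun k => univ.sup (F^[k] w₀)) atTop atTop := by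
      refine tendsto_atTop_atTop_of_monotone (fun a b h => sup_mono_fun fun i _ => hu h i)
        fun C => ?_
      by_contra! h
      exact hb ⟨fun _ => C, Set.forall_mem_range.2 fun k i => (le_sup (mem_univ i)).trans (h k).le⟩
    obtain ⟨z, hz, hz0, hzT⟩ := exists_le_map_of_tendsto_sup_atTop hW hWc hT hTs huW
      (fun k => (hu k.le_succ).trans_eq (Function.iterate_succ_apply' F k w₀)) hN
    exact ⟨z, hz, hz0, Or.inr hzT⟩

end Iteration

section InvariantCone

variable {n : ℕ} (S : Set (Matrix (Fin n) (Fin n) ℝ≥0))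

structure IsNontrivialInvariantCone (W : Set (Fin n → ℝ≥0)) : Prop where
  maxCone : MaxCone W
  isClosed : IsClosed W
  mapsTo : ∀ A ∈ S, Set.MapsTo (maxMul A) W W
  exists_ne_zero : ∃ w ∈ W, w ≠ 0

structure IsCommutingMaxLinear (f : (Fin n → ℝ≥0) → Fin n → ℝ≥0) : Prop where
  continuous : Continuous f
  map_sup : ∀ x y, f (x ⊔ y) = f x ⊔ f y
  map_smul : ∀ (r : ℝ≥0) x, f (r • x) = r • f x
  comm : ∀ B ∈ S, ∀ x, f (maxMul B x) = maxMul B (f x)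

variable {S}

theorem IsCommutingMaxLinear.map_zero {f : (Fin n → ℝ≥0) → Fin n → ℝ≥0}
    (hf : IsCommutingMaxLinear S f) : f 0 = 0 := by
  simpa only [zero_smul] using hf.map_smul 0 0

theorem isCommutingMaxLinear_maxMul
    (hcomm : ∀ A ∈ S, ∀ B ∈ S, maxMatMul A B = maxMatMul B A)
    {A : Matrix (Fin n) (Fin n) ℝ≥0} (hA : A ∈ S) : IsCommutingMaxLinear S (maxMul A) where
  continuous := continuous_maxMul A
  map_sup := maxMul_sup A
  map_smul := maxMul_smul A
  comm B hB x := by rw [← maxMul_maxMatMul, hcomm A hA B hB, maxMul_maxMatMul]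

theorem isCommutingMaxLinear_smul (c : ℝ≥0) : IsCommutingMaxLinear S (c • ·) where
  continuous := continuous_const_smul c
  map_sup x y := funext fun i => mul_max c (x i) (y i)
  map_smul r x := smul_comm c r x
  comm B _ x := (maxMul_smul B c x).symm

theorem IsNontrivialInvariantCone.setOf_le {W : Set (Fin n → ℝ≥0)}
    (hW : IsNontrivialInvariantCone S W) {f g : (Fin n → ℝ≥0) → Fin n → ℝ≥0}
    (hf : IsCommutingMaxLinear S f) (hg : IsCommutingMaxLinear S g)
    (hv : ∃ v ∈ W, v ≠ 0 ∧ f v ≤ g v) : IsNontrivialInvariantCone S {v ∈ W | f v ≤ g v} where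
  maxCone := by
    refine ⟨⟨hW.maxCone.1, ?_⟩, fun x hx y hy => ⟨hW.maxCone.sup_mem hx.1 hy.1, ?_⟩,
      fun r x hx => ⟨hW.maxCone.smul_mem r hx.1, ?_⟩⟩
    · rw [hf.map_zero]; exact zero_le
    · rw [hf.map_sup, hg.map_sup]; exact sup_le_sup hx.2 hy.2
    · rw [hf.map_smul, hg.map_smul]; exact smul_le_smul_of_nonneg_left hx.2 zero_le
  isClosed := hW.isClosed.inter (isClosed_le hf.continuous hg.continuous)
  mapsTo B hB x hx := ⟨hW.mapsTo B hB hx.1, by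
    rw [hf.comm B hB, hg.comm B hB]; exact monotone_maxMul B hx.2⟩
  exists_ne_zero := by
    obtain ⟨v, hvW, hv0, hle⟩ := hv
    exact ⟨v, ⟨hvW, hle⟩, hv0⟩

end InvariantCone

section Minimal

variable {n : ℕ} {S : Set (Matrix (Fin n) (Fin n) ℝ≥0)}

theorem MaxCone.inter_sup_univ_eq_one_nonempty {W : Set (Fin n → ℝ≥0)} (hW : MaxCone W)
    (hne : ∃ w ∈ W, w ≠ 0) : (W ∩ {v | univ.sup v = 1}).Nonempty := by
  obtain ⟨w, hw, hw0⟩ := hne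
  exact ⟨_, hW.smul_mem _ hw, sup_univ_inv_smul_self hw0⟩

theorem isNontrivialInvariantCone_sInter {c : Set (Set (Fin n → ℝ≥0))}
    (hc : c ⊆ {W | IsNontrivialInvariantCone S W}) (hch : IsChain (· ⊆ ·) c)
    (hne : c.Nonempty) : IsNontrivialInvariantCone S (⋂₀ c) where
  maxCone := ⟨fun W hW => (hc hW).maxCone.1,
    fun _ hx _ hy W hW => (hc hW).maxCone.sup_mem (hx W hW) (hy W hW),
    fun r _ hx W hW => (hc hW).maxCone.smul_mem r (hx W hW)⟩
  isClosed := isClosed_sInter fun W hW => (hc hW).isClosed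
  mapsTo A hA _ hx W hW := (hc hW).mapsTo A hA (hx W hW)
  exists_ne_zero := by
    have hc₀ : Nonempty c := hne.to_subtype
    obtain ⟨v, hv⟩ := IsCompact.nonempty_iInter_of_directed_nonempty_isCompact_isClosed
      (fun W : c => (W : Set (Fin n → ℝ≥0)) ∩ {v | univ.sup v = 1})
      (fun W₁ W₂ => (hch.total W₁.2 W₂.2).elim
        (fun h => ⟨W₁, subset_rfl, Set.inter_subset_inter_left _ h⟩)
        (fun h => ⟨W₂, Set.inter_subset_inter_left _ h, subset_rfl⟩))
      (fun W => (hc W.2).maxCone.inter_sup_univ_eq_one_nonempty (hc W.2).exists_ne_zero)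
      (fun W => isCompact_setOf_sup_univ_eq_one.inter_left (hc W.2).isClosed)
      (fun W => (hc W.2).isClosed.inter (isClosed_singleton.preimage continuous_sup_univ))
    have hv' := Set.mem_iInter.1 hv
    have hv1 : univ.sup v = 1 := (hv' hc₀.some).2
    exact ⟨v, fun W hW => (hv' ⟨W, hW⟩).1, fun h0 => one_ne_zero (hv1.symm.trans
      (sup_univ_eq_zero_iff.2 h0))⟩

theorem IsNontrivialInvariantCone.exists_minimal {V : Set (Fin n → ℝ≥0)}
    (hV : IsNontrivialInvariantCone S V) :
    ∃ W ⊆ V, Minimal (IsNontrivialInvariantCone S) W :=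
  zorn_superset_nonempty _ (fun _ hc hch hne => ⟨_, isNontrivialInvariantCone_sInter hc hch hne,
    fun _ => Set.sInter_subset_of_mem⟩) V hV

theorem Minimal.forall_le_of_exists_le {W : Set (Fin n → ℝ≥0)}
    (hmin : Minimal (IsNontrivialInvariantCone S) W) {f g : (Fin n → ℝ≥0) → Fin n → ℝ≥0}
    (hf : IsCommutingMaxLinear S f) (hg : IsCommutingMaxLinear S g)
    (hv : ∃ v ∈ W, v ≠ 0 ∧ f v ≤ g v) : ∀ w ∈ W, f w ≤ g w := by
  have hWeq := hmin.eq_of_subset (hmin.prop.setOf_le hf hg hv) fun _ hx => hx.1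
  exact fun w hw => (hWeq.symm ▸ hw : w ∈ {v ∈ W | f v ≤ g v}).2

theorem Minimal.exists_maxMul_eq_smul (hcomm : ∀ A ∈ S, ∀ B ∈ S, maxMatMul A B = maxMatMul B A)
    {W : Set (Fin n → ℝ≥0)} (hmin : Minimal (IsNontrivialInvariantCone S) W)
    {A : Matrix (Fin n) (Fin n) ℝ≥0} (hA : A ∈ S) {w : Fin n → ℝ≥0} (hw : w ∈ W)
    (hw0 : w ≠ 0) : ∃ c : ℝ≥0, maxMul A w = c • w := by
  refine exists_eq_smul_of_forall_smul_le_or_le hw0 fun c => ?_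
  rcases eq_zero_or_pos c with rfl | hc
  · exact Or.inl (by simp only [zero_smul]; exact zero_le)
  have hA' := isCommutingMaxLinear_maxMul hcomm hA
  have hc' := isCommutingMaxLinear_smul (S := S) c
  obtain ⟨v, hv, hv0, hle | hle⟩ :=
    exists_ne_zero_map_le_or_le_map (T := fun x => c⁻¹ • maxMul A x)
      hmin.prop.maxCone hmin.prop.isClosed
      (fun _ hx => hmin.prop.maxCone.smul_mem _ (hmin.prop.mapsTo A hA hx))
      ((continuous_const_smul _).comp (continuous_maxMul A))
      (fun _ _ h => smul_le_smul_of_nonneg_left (monotone_maxMul A h) zero_le)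
      (fun r x => by rw [maxMul_smul, smul_comm]) hw hw0
  · exact Or.inr <| hmin.forall_le_of_exists_le hA' hc'
      ⟨v, hv, hv0, (inv_smul_le_iff_of_pos hc).1 hle⟩ w hw
  · exact Or.inl <| hmin.forall_le_of_exists_le hc' hA'
      ⟨v, hv, hv0, (le_inv_smul_iff_of_pos hc).1 hle⟩ w hw

end Minimal

theorem stmt15_general {n : ℕ} (S : Set (Matrix (Fin n) (Fin n) ℝ≥0))
    (hcomm : ∀ A ∈ S, ∀ B ∈ S, maxMatMul A B = maxMatMul B A)
    (V : Set (Fin n → ℝ≥0)) (hV : MaxCone V) (hcl : IsClosed V)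
    (hnz : ∃ w ∈ V, w ≠ 0)
    (hinv : ∀ A ∈ S, ∀ v ∈ V, maxMul A v ∈ V) :
    ∃ v ∈ V, v ≠ 0 ∧ ∀ A ∈ S, ∃ lam : ℝ≥0, maxMul A v = lam • v := by
  obtain ⟨W, hWV, hmin⟩ := (IsNontrivialInvariantCone.mk hV hcl hinv hnz).exists_minimal
  obtain ⟨w, hw, hw0⟩ := hmin.prop.exists_ne_zero
  exact ⟨w, hWV hw, hw0, fun A hA => hmin.exists_maxMul_eq_smul hcomm hA hw hw0⟩

theorem stmt15 {n : ℕ} (S : Set (Matrix (Fin n) (Fin n) ℝ≥0))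
    (hmul : ∀ A ∈ S, ∀ B ∈ S, maxMatMul A B ∈ S)
    (hcomm : ∀ A ∈ S, ∀ B ∈ S, maxMatMul A B = maxMatMul B A)
    (V : Set (Fin n → ℝ≥0)) (hV : MaxCone V) (hcl : IsClosed V)
    (hnz : ∃ w ∈ V, w ≠ 0)
    (hinv : ∀ A ∈ S, ∀ v ∈ V, maxMul A v ∈ V) :
    ∃ v ∈ V, v ≠ 0 ∧ ∀ A ∈ S, ∃ lam : ℝ≥0, maxMul A v = lam • v :=
  stmt15_general S hcomm V hV hcl hnz hinv
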